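/- arXiv:2605.04701 — 3 statements merged into one kernel-verified Lean document; each statement's English description precedes it below -/
import Mathlib

section
/- Let T be a tree and let σ be an ordering of the vertices of T satisfying Property D (so that σ is a DFS-ordering of T), with first vertex r; regard T as rooted at r, so that the parent of a non-root vertex w is its neighbor on the unique path from r to w. Let u and v be vertices with u <σ v such that every vertex strictly between u and v in σ is a leaf of T (a vertex of degree one). Then the parent of v lies on the unique path from r to u in T. -/
/-- Property D for an ordering of the vertices (given as a linear order on the
vertex type) with respect to a graph `H`: the four-point characterization of
DFS-orderings. -/
def PropertyD {V : Type*} [LinearOrder V] (H : SimpleGraph V) : Prop :=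
  ∀ a b c : V, a < b → b < c → H.Adj a c → ¬ H.Adj a b →
    ∃ d : V, a < d ∧ d < b ∧ H.Adj d b

/-!
Root the tree at the first vertex `r`. Property D forces every vertex `x ≠ r` to have a neighbour
earlier than `x` (push an edge of a walk from `r` across `x` back onto `x`), and by induction
along the order this shows that parents precede their children, so that the earlier neighbours
of `x` are exactly its parent. A second induction shows that if `w` is adjacent to `v`, then `w`
is an ancestor of every `x` with `w < x < v`: either `w` is adjacent to `x`, or Property D gives
an earlier neighbour `d` of `x` with `w < d`, which is the parent of `x`.

Now let `v'` be the parent of `v`, so `v' < v`. If `v' < u`, the previous fact applies to `x = u`.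
If `u < v'`, then `v'` lies strictly between `u` and `v`, yet it has two distinct neighbours,
`v` and its own parent, so it is not a leaf.
-/

open SimpleGraph

namespace SimpleGraph

variable {V : Type*} {G : SimpleGraph V}

lemma Walk.exists_adj_lt_of_lt_of_le [LinearOrder V] {x a c : V} (p : G.Walk a c)
    (ha : a < x) (hc : x ≤ c) : ∃ y z, G.Adj y z ∧ y < x ∧ x ≤ z := by
  induction p with
  | nil => exact (ha.trans_le hc).false.elim
  | @cons a b c hab p ih =>
    rcases lt_or_ge b x with hb | hb
    · exact ih hb hc
    · exact ⟨a, b, hab, ha, hb⟩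

lemma IsAcyclic.support_subset_of_mem_support (hG : G.IsAcyclic) {r x d : V}
    {p : G.Walk r x} (hp : p.IsPath) (hd : d ∈ p.support) {q : G.Walk r d} (hq : q.IsPath) :
    q.support ⊆ p.support := by
  classical
  have hq_eq : q = p.takeUntil d hd :=
    Subtype.mk.inj <| (hG.subsingleton_path r d).elim ⟨q, hq⟩ ⟨_, hp.takeUntil hd⟩
  exact hq_eq ▸ p.support_takeUntil_subset_support hd

end SimpleGraph

namespace PropertyD

variable {V : Type*} [LinearOrder V] {T : SimpleGraph V}

lemma exists_adj_lt (hD : PropertyD T) (hconn : T.Preconnected) {r x : V} (hrx : r < x) :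
    ∃ d, d < x ∧ T.Adj d x := by
  obtain ⟨y, z, hyz, hyx, hxz⟩ := (hconn r x).some.exists_adj_lt_of_lt_of_le hrx le_rfl
  rcases hxz.eq_or_lt with rfl | hxz
  · exact ⟨y, hyx, hyz⟩
  by_cases hyx' : T.Adj y x
  · exact ⟨y, hyx, hyx'⟩
  obtain ⟨d, -, hdx, hdx'⟩ := hD y x z hyx hxz hyz hyx'
  exact ⟨d, hdx, hdx'⟩

variable [WellFoundedLT V]

lemma lt_of_adj_of_mem_support (hD : PropertyD T) (hT : T.IsTree) {r : V}
    (hfirst : ∀ x, r ≤ x) {x y : V} {p : T.Walk r x} (hp : p.IsPath) (hxy : T.Adj x y)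
    (hy : y ∈ p.support) : y < x := by
  induction x using WellFoundedLT.induction generalizing y with
  | _ x ih =>
  by_contra! hxy_le
  have hxr : x ≠ r := by
    rintro rfl
    rw [(Walk.isPath_iff_nil.mp hp).eq_nil, Walk.support_nil, List.mem_singleton] at hy
    exact hxy.ne hy.symm
  obtain ⟨d, hdx, hdx'⟩ := hD.exists_adj_lt hT.connected.preconnected
    ((hfirst x).lt_of_ne hxr.symm)
  by_cases hdp : d ∈ p.support
  · have hyd : y = d := by
      rw [hT.isAcyclic.eq_penultimate_of_adj_end hp hxy hy,
        hT.isAcyclic.eq_penultimate_of_adj_end hp hdx'.symm hdp]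
    exact (hdx.trans_le (hyd ▸ hxy_le)).false
  · obtain ⟨q, hq⟩ := (hT.connected r d).exists_isPath
    have hxq : x ∈ q.support :=
      hT.isAcyclic.mem_support_of_ne_mem_support_of_adj_of_isPath hq hp hdx' hdp
    exact (ih d hdx hq hdx' hxq).asymm hdx

lemma mem_support_of_adj_of_lt (hD : PropertyD T) (hT : T.IsTree) {r : V}
    (hfirst : ∀ x, r ≤ x) {x z : V} {p : T.Walk r x} (hp : p.IsPath) (hxz : T.Adj x z)
    (hzx : z < x) : z ∈ p.support := by
  by_contra hzp
  obtain ⟨q, hq⟩ := (hT.connected r z).exists_isPath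
  have hxq : x ∈ q.support :=
    hT.isAcyclic.mem_support_of_ne_mem_support_of_adj_of_isPath hq hp hxz.symm hzp
  exact (hD.lt_of_adj_of_mem_support hT hfirst hq hxz.symm hxq).asymm hzx

lemma mem_support_of_lt_of_lt (hD : PropertyD T) (hT : T.IsTree) {r : V}
    (hfirst : ∀ x, r ≤ x) {w v : V} (hwv : T.Adj w v) {x : V} (hwx : w < x) (hxv : x < v)
    {p : T.Walk r x} (hp : p.IsPath) : w ∈ p.support := by
  induction x using WellFoundedLT.induction with
  | _ x ih =>
  by_cases hwx' : T.Adj w x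
  · exact hD.mem_support_of_adj_of_lt hT hfirst hp hwx'.symm hwx
  obtain ⟨d, hwd, hdx, hdx'⟩ := hD w x v hwx hxv hwv hwx'
  have hdp : d ∈ p.support := hD.mem_support_of_adj_of_lt hT hfirst hp hdx'.symm hdx
  obtain ⟨q, hq⟩ := (hT.connected r d).exists_isPath
  exact hT.isAcyclic.support_subset_of_mem_support hp hdp hq
    (ih d hdx hwd (hdx.trans hxv) hq)

end PropertyD

/-- Let `T` be a tree and `σ` a DFS-ordering of `T` (satisfying Property D) with
first vertex `r`.  Let `u <σ v` be vertices such that every vertex strictly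
between `u` and `v` in `σ` is a leaf of `T` (has exactly one neighbor).  If `v'`
is the parent of `v` when `T` is rooted at `r` (i.e. `v'` is adjacent to `v` and
lies on the unique path from `r` to `v`), then `v'` lies on the unique path from
`r` to `u` in `T`. -/
theorem stmt3 {V : Type*} [Fintype V] [LinearOrder V] (T : SimpleGraph V)
    (hT : T.IsTree) (hD : PropertyD T)
    (r : V) (hfirst : ∀ x : V, r ≤ x)
    (u v : V) (huv : u < v)
    (hleaves : ∀ x : V, u < x → x < v → ∃! y : V, T.Adj x y)
    (v' : V) (hv'adj : T.Adj v' v)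
    (hv'path : ∀ p : T.Walk r v, p.IsPath → v' ∈ p.support)
    (q : T.Walk r u) (hq : q.IsPath) :
    v' ∈ q.support := by
  obtain ⟨p, hp⟩ := (hT.connected r v).exists_isPath
  have hv'v : v' < v := hD.lt_of_adj_of_mem_support hT hfirst hp hv'adj.symm (hv'path p hp)
  rcases lt_trichotomy v' u with hv'u | rfl | huv'
  · exact hD.mem_support_of_lt_of_lt hT hfirst hv'adj hv'u huv hq
  · exact q.end_mem_support
  · obtain ⟨w, hwv', hwv'_adj⟩ := hD.exists_adj_lt hT.connected.preconnected
      ((hfirst u).trans_lt huv')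
    obtain ⟨y, -, hy⟩ := hleaves v' huv' hv'v
    have hwv : w = v := (hy w hwv'_adj.symm).trans (hy v hv'adj).symm
    exact absurd hwv (hwv'.trans hv'v).ne
end

section
/- Let T be a tree and let σ be an ordering of the vertices of T satisfying Property D (so that σ is a DFS-ordering of T), with first vertex r; regard T as rooted at r. Let x, y, z be vertices of T such that (1) the parents of x and y are distinct and both lie on the unique path from r to z in T, and (2) z <σ y <σ x. Then the parent of y is strictly closer to z than the parent of x in T, i.e., the distance in T from the parent of y to z is strictly smaller than the distance in T from the parent of x to z. -/
namespace SimpleGraph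

variable {V : Type*} {G : SimpleGraph V}

lemma IsAcyclic.isPath_eq (hG : G.IsAcyclic) {u v : V} {p q : G.Walk u v} (hp : p.IsPath)
    (hq : q.IsPath) : p = q :=
  Subtype.mk.inj <| (hG.subsingleton_path u v).elim ⟨p, hp⟩ ⟨q, hq⟩

lemma IsAcyclic.length_eq_dist (hG : G.IsAcyclic) {u v : V} {p : G.Walk u v} (hp : p.IsPath) :
    p.length = G.dist u v := by
  obtain ⟨q, hq, hlen⟩ := p.reachable.exists_path_of_dist
  rw [hG.isPath_eq hp hq, hlen]

lemma Walk.exists_mem_support_adj_lt_lt [LinearOrder V] {a b m : V} (p : G.Walk a b)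
    (ham : a < m) (hmb : m < b) (hm : m ∉ p.support) :
    ∃ c d, c ∈ p.support ∧ G.Adj c d ∧ c < m ∧ m < d := by
  induction p with
  | nil => exact absurd (ham.trans hmb) (lt_irrefl _)
  | @cons a c b hac q ih =>
    rw [support_cons, List.mem_cons, not_or] at hm
    have hcm : c ≠ m := by
      rintro rfl
      exact hm.2 q.start_mem_support
    rcases lt_or_gt_of_ne hcm with hcm | hcm
    · obtain ⟨c', d, hc', hadj, hc'm, hmd⟩ := ih hcm hmb hm.2
      exact ⟨c', d, List.mem_cons_of_mem _ hc', hadj, hc'm, hmd⟩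
    · exact ⟨a, c, List.mem_cons_self, hac, ham, hcm⟩

def IsAncestor (G : SimpleGraph V) (r u v : V) : Prop :=
  ∀ p : G.Walk r v, p.IsPath → u ∈ p.support

variable {r u v w : V}

lemma IsAncestor.refl : G.IsAncestor r v v :=
  fun p _ => p.end_mem_support

lemma IsAncestor.trans (huv : G.IsAncestor r u v) (hvw : G.IsAncestor r v w) :
    G.IsAncestor r u w := by
  classical
  exact fun p hp =>
    p.support_takeUntil_subset_support (hvw p hp) (huv _ (hp.takeUntil (hvw p hp)))

lemma isAncestor_iff_mem_support (hG : G.IsAcyclic) {p : G.Walk r v} (hp : p.IsPath) :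
    G.IsAncestor r u v ↔ u ∈ p.support :=
  ⟨fun h => h p hp, fun hu q hq => by rwa [hG.isPath_eq hq hp]⟩

lemma IsAncestor.dist_add (hG : G.IsTree) (h : G.IsAncestor r u v) :
    G.dist r u + G.dist u v = G.dist r v := by
  obtain ⟨p, hp, -⟩ := hG.existsUnique_path r v
  obtain ⟨p₀, p₁, hp₀, hp₁, rfl⟩ := hp.mem_support_iff_exists_append.mp (h p hp)
  rw [← hG.isAcyclic.length_eq_dist hp₀, ← hG.isAcyclic.length_eq_dist hp₁,
    ← hG.isAcyclic.length_eq_dist hp, Walk.length_append]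

lemma IsAncestor.of_mem_support_of_isPath (hG : G.IsTree) (h : G.IsAncestor r u w)
    {q : G.Walk u w} (hq : q.IsPath) (hv : v ∈ q.support) : G.IsAncestor r u v := by
  obtain ⟨p, hp, -⟩ := hG.existsUnique_path r w
  obtain ⟨p₀, p₁, -, hp₁, rfl⟩ := hp.mem_support_iff_exists_append.mp (h p hp)
  obtain rfl := hG.isAcyclic.isPath_eq hp₁ hq
  obtain ⟨q₀, q₁, -, -, rfl⟩ := hq.mem_support_iff_exists_append.mp hv
  rw [Walk.append_assoc] at hp
  rw [isAncestor_iff_mem_support hG.isAcyclic hp.of_append_left, Walk.mem_support_append_iff]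
  exact Or.inl p₀.end_mem_support

/-- Once `v` is known not to be an ancestor of its neighbour `u`, `u` is the parent of `v`. -/
lemma isAncestor_iff_of_adj (hG : G.IsTree) (hadj : G.Adj u v) (hv : ¬ G.IsAncestor r v u) :
    G.IsAncestor r w v ↔ w = v ∨ G.IsAncestor r w u := by
  obtain ⟨s, hs, -⟩ := hG.existsUnique_path r u
  have hvs : v ∉ s.support := fun h => hv ((isAncestor_iff_mem_support hG.isAcyclic hs).mpr h)
  rw [isAncestor_iff_mem_support hG.isAcyclic (hs.concat hvs hadj), Walk.support_concat,
    List.mem_append, List.mem_singleton, isAncestor_iff_mem_support hG.isAcyclic hs, or_comm]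

lemma isAncestor_of_adj (hG : G.IsTree) (hadj : G.Adj u v) (hv : ¬ G.IsAncestor r v u) :
    G.IsAncestor r u v :=
  (isAncestor_iff_of_adj hG hadj hv).mpr (Or.inr IsAncestor.refl)

end SimpleGraph

open SimpleGraph

namespace PropertyD

variable {V : Type*} [LinearOrder V] {G : SimpleGraph V}

lemma exists_lt_adj_of_walk (hD : PropertyD G) {a v : V} (p : G.Walk a v) (hav : a < v) :
    ∃ u, u < v ∧ G.Adj u v := by
  induction p with
  | nil => exact absurd hav (lt_irrefl _)
  | @cons a b v hab q ih =>
    rcases lt_trichotomy b v with hbv | rfl | hvb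
    · exact ih hbv
    · exact ⟨a, hav, hab⟩
    · by_cases hav' : G.Adj a v
      · exact ⟨a, hav, hav'⟩
      · obtain ⟨d, -, hdv, hadj⟩ := hD a v b hav hvb hab hav'
        exact ⟨d, hdv, hadj⟩

variable [WellFoundedLT V] (hG : G.IsTree) (hD : PropertyD G) {r : V} (hr : ∀ w, r ≤ w)
include hG hD hr

lemma le_of_isAncestor {u v : V} (h : G.IsAncestor r u v) : u ≤ v := by
  induction v using WellFoundedLT.induction generalizing u with
  | _ v ih =>
    rcases (hr v).eq_or_lt with rfl | hrv
    · have hu : u ∈ [r] := h Walk.nil Walk.IsPath.nil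
      exact (List.mem_singleton.mp hu).le
    · obtain ⟨p, -, -⟩ := hG.existsUnique_path r v
      obtain ⟨u₀, hu₀v, hadj⟩ := hD.exists_lt_adj_of_walk p hrv
      have hv : ¬ G.IsAncestor r v u₀ := fun h' => (ih u₀ hu₀v h').not_gt hu₀v
      rcases (isAncestor_iff_of_adj hG hadj hv).mp h with rfl | hu
      · exact le_rfl
      · exact (ih u₀ hu₀v hu).trans hu₀v.le

lemma not_isAncestor_of_lt {u v : V} (huv : u < v) : ¬ G.IsAncestor r v u :=
  fun h => (le_of_isAncestor hG hD hr h).not_gt huv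

/-- The subtree of `u` is an interval of the ordering. -/
lemma isAncestor_of_lt_of_lt {u m w : V} (h : G.IsAncestor r u w) (hum : u < m) (hmw : m < w) :
    G.IsAncestor r u m := by
  induction m using WellFoundedLT.induction generalizing u with
  | _ m ih =>
    obtain ⟨q, hq, -⟩ := hG.existsUnique_path u w
    by_cases hm : m ∈ q.support
    · exact h.of_mem_support_of_isPath hG hq hm
    obtain ⟨a, b, ha, hab, ham, hmb⟩ := q.exists_mem_support_adj_lt_lt hum hmw hm
    have hua := h.of_mem_support_of_isPath hG hq ha
    by_cases ham' : G.Adj a m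
    · exact hua.trans (isAncestor_of_adj hG ham' (not_isAncestor_of_lt hG hD hr ham))
    · -- Property D supplies the neighbour `d` of `m` that precedes it; `d` is its parent.
      obtain ⟨d, had, hdm, hdadj⟩ := hD a m b ham hmb hab ham'
      have hud := ih d hdm h ((le_of_isAncestor hG hD hr hua).trans_lt had) (hdm.trans hmw)
      exact hud.trans (isAncestor_of_adj hG hdadj (not_isAncestor_of_lt hG hD hr hdm))

end PropertyD

theorem stmt4_general {V : Type*} [Fintype V] [LinearOrder V] (T : SimpleGraph V)
    (hT : T.IsTree) (hD : PropertyD T)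
    (r : V) (hfirst : ∀ w : V, r ≤ w)
    (x y z x' y' : V)
    (hx'path : ∀ p : T.Walk r x, p.IsPath → x' ∈ p.support)
    (hy'adj : T.Adj y' y)
    (hne : x' ≠ y')
    (honpath : ∀ p : T.Walk r z, p.IsPath → x' ∈ p.support ∧ y' ∈ p.support)
    (hzy : z < y) (hyx : y < x) :
    T.dist y' z < T.dist x' z := by
  have hx'z : T.IsAncestor r x' z := fun p hp => (honpath p hp).1
  have hy'z : T.IsAncestor r y' z := fun p hp => (honpath p hp).2
  have hx'y : x' < y := (hD.le_of_isAncestor hT hfirst hx'z).trans_lt hzy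
  have hy'y : y' < y := (hD.le_of_isAncestor hT hfirst hy'z).trans_lt hzy
  have hx'y' : T.IsAncestor r x' y' :=
    ((isAncestor_iff_of_adj hT hy'adj (hD.not_isAncestor_of_lt hT hfirst hy'y)).mp
      (hD.isAncestor_of_lt_of_lt hT hfirst hx'path hx'y hyx)).resolve_left hx'y.ne
  have hpos : 0 < T.dist x' y' := hT.connected.pos_dist_of_ne hne
  have hx'y'_dist := hx'y'.dist_add hT
  have hx'z_dist := hx'z.dist_add hT
  have hy'z_dist := hy'z.dist_add hT
  omega

/-- Let `T` be a tree and `σ` a DFS-ordering of `T` (satisfying Property D) with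
first vertex `r`; regard `T` as rooted at `r`.  Let `x, y, z` be vertices, and
let `x'` (resp. `y'`) be the parent of `x` (resp. of `y`), i.e. adjacent to `x`
(resp. `y`) and lying on the unique path from `r` to `x` (resp. to `y`).
Assume `x' ≠ y'`, both `x'` and `y'` lie on the unique path from `r` to `z`,
and `z <σ y <σ x`.  Then the parent `y'` of `y` is strictly closer to `z` than
the parent `x'` of `x`, in graph distance in `T`. -/
theorem stmt4 {V : Type*} [Fintype V] [LinearOrder V] (T : SimpleGraph V)
    (hT : T.IsTree) (hD : PropertyD T)
    (r : V) (hfirst : ∀ w : V, r ≤ w)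
    (x y z x' y' : V)
    (hx'adj : T.Adj x' x)
    (hx'path : ∀ p : T.Walk r x, p.IsPath → x' ∈ p.support)
    (hy'adj : T.Adj y' y)
    (hy'path : ∀ p : T.Walk r y, p.IsPath → y' ∈ p.support)
    (hne : x' ≠ y')
    (honpath : ∀ p : T.Walk r z, p.IsPath → x' ∈ p.support ∧ y' ∈ p.support)
    (hzy : z < y) (hyx : y < x) :
    T.dist y' z < T.dist x' z :=
  stmt4_general T hT hD r hfirst x y z x' y' hx'path hy'adj hne honpath hzy hyx
end

section
/- Let T be a tree, let L be a set of leaves of T (vertices of degree one) with V(T) ∖ L nonempty, and let σ be an ordering of the vertices of T satisfying Property D (so that σ is a DFS-ordering of T) whose first vertex is not in L. Then T − L (the subgraph of T induced by V(T) ∖ L) is a tree, and the ordering σ ⊖ L obtained from σ by deleting the vertices of L satisfies Property D with respect to T − L (i.e., it is a DFS-ordering of T − L). -/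
/-- Lift a walk whose support lies in `s` to the induced subgraph on `s`. -/
def liftWalk {V : Type*} {T : SimpleGraph V} {s : Set V} {x y : V} (p : T.Walk x y)
    (h : ∀ v ∈ p.support, v ∈ s) :
    (T.induce s).Walk ⟨x, h x p.start_mem_support⟩ ⟨y, h y p.end_mem_support⟩ :=
  match p, h with
  | SimpleGraph.Walk.nil, _ => SimpleGraph.Walk.nil
  | SimpleGraph.Walk.cons ha q, h =>
      SimpleGraph.Walk.cons (by exact ha)
        (liftWalk q (fun v hv => h v (by simp [SimpleGraph.Walk.support_cons, hv])))

/-- Interior (indeed all) vertices of a path between non-leaves are non-leaves. -/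
lemma path_support_not_leaf {V : Type*} {T : SimpleGraph V} {L : Set V}
    (hLleaf : ∀ x ∈ L, ∃! y : V, T.Adj x y) :
    ∀ {x y : V} (p : T.Walk x y), p.IsPath → x ∉ L → y ∉ L →
      ∀ v ∈ p.support, v ∉ L := by
  intro x y p
  induction p with
  | nil =>
      intro _ hx _ v hv
      simp only [SimpleGraph.Walk.support_nil, List.mem_singleton] at hv
      subst hv; exact hx
  | @cons x w y ha q ih =>
      intro hp hx hy v hv
      have hwL : w ∉ L := by
        cases q with
        | nil => exact hy
        | @cons w u y ha' q' =>
            intro hwL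
            obtain ⟨z, _, huniq⟩ := hLleaf w hwL
            have h1 : x = z := huniq x ha.symm
            have h2 : u = z := huniq u ha'
            have hxs : x ∉ (SimpleGraph.Walk.cons ha' q').support := by
              have := hp.support_nodup
              simp only [SimpleGraph.Walk.support_cons, List.nodup_cons] at this
              exact this.1
            apply hxs
            rw [SimpleGraph.Walk.support_cons]
            have : x = u := h1.trans h2.symm
            subst this
            exact List.mem_cons_of_mem _ q'.start_mem_support
      simp only [SimpleGraph.Walk.support_cons, List.mem_cons] at hv
      rcases hv with rfl | hv
      · exact hx
      · exact ih hp.of_cons hwL hy v hv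

/-- Let `T` be a tree, `L` a set of leaves of `T` (vertices with exactly one
neighbor) whose complement is nonempty, and `σ` a DFS-ordering of `T`
(satisfying Property D) whose first vertex `r` is not in `L`.  Then `T − L`
(the subgraph induced by the complement of `L`) is a tree, and the ordering
`σ ⊖ L` (the restriction of the ordering to the complement of `L`) satisfies
Property D with respect to `T − L`. -/
theorem stmt6 {V : Type*} [Fintype V] [LinearOrder V] (T : SimpleGraph V)
    (hT : T.IsTree) (L : Set V)
    (hLleaf : ∀ x ∈ L, ∃! y : V, T.Adj x y)
    (hne : (Lᶜ : Set V).Nonempty)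
    (hD : PropertyD T)
    (r : V) (hfirst : ∀ x : V, r ≤ x) (hrL : r ∉ L) :
    (T.induce (Lᶜ : Set V)).IsTree ∧
    (∀ a b c : (Lᶜ : Set V), (a : V) < (b : V) → (b : V) < (c : V) →
      (T.induce (Lᶜ : Set V)).Adj a c → ¬ (T.induce (Lᶜ : Set V)).Adj a b →
      ∃ d : (Lᶜ : Set V), (a : V) < (d : V) ∧ (d : V) < (b : V) ∧
        (T.induce (Lᶜ : Set V)).Adj d b) := by
  constructor
  · constructor
    · -- connected
      rw [SimpleGraph.connected_iff]
      refine ⟨fun x y => ?_, ⟨⟨hne.choose, hne.choose_spec⟩⟩⟩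
      obtain ⟨x, hx⟩ := x
      obtain ⟨y, hy⟩ := y
      obtain ⟨w⟩ := hT.isConnected.preconnected x y
      have hp := w.toPath.2
      set p : T.Walk x y := (w.toPath : T.Walk x y) with hpdef
      have hsupp : ∀ v ∈ p.support, v ∈ (Lᶜ : Set V) :=
        path_support_not_leaf hLleaf p hp hx hy
      exact ⟨liftWalk p hsupp⟩
    · -- acyclic
      intro v c hc
      have := hc.map (f := (SimpleGraph.Embedding.induce (G := T) (Lᶜ : Set V)).toHom)
        (SimpleGraph.Embedding.induce (G := T) (Lᶜ : Set V)).injective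
      exact hT.IsAcyclic _ this
  · intro a b c hab hbc hac hnab
    simp only [SimpleGraph.comap_adj, Function.Embedding.coe_subtype] at hac hnab
    obtain ⟨d, had, hdb, hadj⟩ := hD a b c hab hbc hac hnab
    have hdL : d ∉ L := by
      intro hdL
      obtain ⟨z, _, huniq⟩ := hLleaf d hdL
      have hbz : (b : V) = z := huniq b hadj
      have hnad : ¬ T.Adj (a : V) d := by
        intro h
        have : (a : V) = z := huniq a h.symm
        exact hab.ne (this.trans hbz.symm)
      obtain ⟨e, hae, hed, hadj'⟩ := hD a d c had (hdb.trans hbc) hac hnad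
      have : e = z := huniq e hadj'.symm
      rw [this, ← hbz] at hed
      exact absurd (hed.trans hdb) (lt_irrefl _)
    refine ⟨⟨d, hdL⟩, had, hdb, ?_⟩
    simpa using hadj
end
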